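/- Assume s = d_T·T_max, δ = d_T and R₀ > 1, and let (T*, I*, V*) be the unique equilibrium of the HCV system with T* > 0, I* > 0, V* > 0. Then every complex eigenvalue of the Jacobian matrix of the HCV vector field at (T*, I*, V*) has negative real part; in particular, the infected equilibrium is locally asymptotically stable. -/

import Mathlib

/-!
Adding the `T` and `I` equilibrium equations (with `s = d_T T_max`, `d_I + q = d_T`) gives
`(d_T T_max + r_T T* + r_I I*) ((T* + I*) / T_max - 1) = q I*`, so the equilibrium lies above the
carrying capacity. The equilibrium equations then bring the Jacobian to the form
`[[-A, r, -b], [v - g, -(w + g), b], [0, k, -c]]` with `k b = c w` and `A, g, w, v > 0`, and the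
excess over `T_max` gives `r < w < A + r`, `r v < A w` and `v < A`. These make the characteristic
polynomial `z³ + a₁ z² + a₂ z + a₃` satisfy `a₁ > 0`, `a₃ > 0`, `a₁ a₂ > a₃`, and the Routh–Hurwitz
criterion for cubics puts every eigenvalue in the open left half-plane.
-/

open Set Matrix

/-- `(T, I, V)` is an equilibrium point of the HCV system. -/
def hcvEquil (s rT rI dT dI Tmax β p q c η ε : ℝ) (T I V : ℝ) : Prop :=
  s + rT * T * (1 - (T + I) / Tmax) - dT * T - (1 - η) * β * V * T + q * I = 0 ∧
  rI * I * (1 - (T + I) / Tmax) + (1 - η) * β * V * T - dI * I - q * I = 0 ∧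
  (1 - ε) * p * I - c * V = 0

/-- The uninfected equilibrium value `T⁰`. -/
noncomputable def hcvT0 (s rT dT Tmax : ℝ) : ℝ :=
  Tmax / (2 * rT) * (rT - dT + Real.sqrt ((rT - dT) ^ 2 + 4 * rT * s / Tmax))

/-- The basic reproduction number `R₀` (with `1 - θ = (1-ε)(1-η)`). -/
noncomputable def hcvR0 (s rT rI dT dI Tmax β p q c η ε : ℝ) : ℝ :=
  rI / (dI + q) * (1 - hcvT0 s rT dT Tmax / Tmax)
    + (1 - ε) * (1 - η) * β * p * hcvT0 s rT dT Tmax / (c * (dI + q))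

theorem Complex.re_neg_of_routhHurwitz_cubic {a b c : ℝ} (ha : 0 < a) (hc : 0 < c)
    (habc : c < a * b) {z : ℂ} (hz : z ^ 3 + a * z ^ 2 + b * z + c = 0) : z.re < 0 := by
  obtain ⟨x, y⟩ := z
  by_contra! hx
  have hb : 0 < b := by nlinarith
  have hre := congrArg Complex.re hz
  have him := congrArg Complex.im hz
  simp only [pow_succ, pow_zero, one_mul, Complex.add_re, Complex.add_im, Complex.mul_re,
    Complex.mul_im, Complex.ofReal_re, Complex.ofReal_im, Complex.zero_re, Complex.zero_im]
    at hre him hx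
  rcases eq_or_ne y 0 with rfl | hy
  · nlinarith [pow_nonneg hx 3, pow_nonneg hx 2]
  · have hy2 : y ^ 2 = 3 * x ^ 2 + 2 * a * x + b := by
      have := mul_left_cancel₀ hy (b := y ^ 2 - (3 * x ^ 2 + 2 * a * x + b)) (c := 0)
        (by linear_combination -him)
      linarith
    -- substituting `y ^ 2` into the real part leaves a cubic in `x ≥ 0` with positive coefficients
    have hx3 : 8 * x ^ 3 + 8 * a * x ^ 2 + 2 * (b + a ^ 2) * x + (a * b - c) = 0 := by
      linear_combination -hre - (3 * x + a) * hy2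
    nlinarith [pow_nonneg hx 3, pow_nonneg hx 2]

def Matrix.principalMinorSum {R : Type*} [CommRing R] (M : Matrix (Fin 3) (Fin 3) R) : R :=
  M 0 0 * M 1 1 - M 0 1 * M 1 0 + M 0 0 * M 2 2 - M 0 2 * M 2 0 + M 1 1 * M 2 2 - M 1 2 * M 2 1

theorem Matrix.cubic_eq_zero_of_mem_spectrum (M : Matrix (Fin 3) (Fin 3) ℝ) {z : ℂ}
    (hz : z ∈ spectrum ℂ (M.map Complex.ofReal)) :
    z ^ 3 - M.trace * z ^ 2 + M.principalMinorSum * z - M.det = 0 := by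
  rw [spectrum.mem_iff, Algebra.algebraMap_eq_smul_one, isUnit_iff_isUnit_det,
    isUnit_iff_ne_zero, not_not, det_fin_three] at hz
  simp only [sub_apply, smul_apply, map_apply, smul_eq_mul, one_apply_eq, ne_eq, Fin.reduceEq,
    not_false_eq_true, one_apply_ne, mul_one, mul_zero] at hz
  rw [trace_fin_three, principalMinorSum, det_fin_three]
  push_cast
  linear_combination hz

theorem Matrix.re_neg_of_mem_spectrum_fin_three (M : Matrix (Fin 3) (Fin 3) ℝ)
    (htr : M.trace < 0) (hdet : M.det < 0) (hRH : -M.det < -M.trace * M.principalMinorSum) :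
    ∀ z ∈ spectrum ℂ (M.map Complex.ofReal), z.re < 0 := by
  intro z hz
  refine Complex.re_neg_of_routhHurwitz_cubic (neg_pos.2 htr) (neg_pos.2 hdet) hRH ?_
  push_cast
  linear_combination M.cubic_eq_zero_of_mem_spectrum hz

theorem re_neg_of_mem_spectrum_reduced_jacobian {A r b v g w k c : ℝ} (hA : 0 < A) (hg : 0 < g)
    (hw : 0 < w) (hv : 0 < v) (hc : 0 < c) (hkb : k * b = c * w) (hrw : r < w)
    (hwAr : w < A + r) (hrv : r * v < A * w) (hvA : v < A) :
    ∀ z ∈ spectrum ℂ ((!![-A, r, -b; v - g, -(w + g), b; 0, k, -c]).map Complex.ofReal),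
      z.re < 0 := by
  set M : Matrix (Fin 3) (Fin 3) ℝ := !![-A, r, -b; v - g, -(w + g), b; 0, k, -c]
  have htr : -M.trace = A + w + g + c := by rw [trace_fin_three_of]; ring
  have hdet : -M.det = c * (g * (A + r - w) + v * (w - r)) := by
    simp only [M, det_fin_three, of_apply, cons_val', cons_val_zero, cons_val_one, cons_val,
      cons_val_fin_one]
    linear_combination (v - g - A) * hkb
  have hm : M.principalMinorSum = g * (A + r) + (A * w - r * v) + c * (A + g) := by
    simp only [M, principalMinorSum, of_apply, cons_val', cons_val_zero, cons_val_one, cons_val,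
      cons_val_fin_one]
    linear_combination -hkb
  have hm_pos : 0 < M.principalMinorSum := by
    rw [hm]
    have := mul_pos hg (show 0 < A + r by linarith)
    have := mul_pos hc (add_pos hA hg)
    linarith
  have hdet_neg : 0 < -M.det := by
    rw [hdet]
    have := mul_pos hg (sub_pos.2 hwAr)
    have := mul_pos hv (sub_pos.2 hrw)
    positivity
  refine M.re_neg_of_mem_spectrum_fin_three (by linarith) (by linarith) ?_
  have hRH : -M.trace * M.principalMinorSum - -M.det
      = (A + w + g) * M.principalMinorSum + c * (c * (A + g) + w * (A - v) + w * g) := by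
    rw [htr, hdet, hm]; ring
  have := mul_pos (by positivity : 0 < A + w + g) hm_pos
  have := mul_pos hw (sub_pos.2 hvA)
  have : 0 < c * (c * (A + g) + w * (A - v) + w * g) := by positivity
  linarith

section Equilibrium

variable {rT rI dT dI Tmax β p q c η ε Ts Is Vs : ℝ}

theorem hcvEquil.excess_eq (heq : hcvEquil (dT * Tmax) rT rI dT dI Tmax β p q c η ε Ts Is Vs)
    (hδ : dI + q = dT) (hTmax : Tmax ≠ 0) :
    (dT * Tmax + rT * Ts + rI * Is) * ((Ts + Is) / Tmax - 1) = q * Is := by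
  obtain ⟨e1, e2, -⟩ := heq
  field_simp at e1 e2 ⊢
  linear_combination -e1 - e2 - Is * Tmax * hδ

theorem hcvEquil.infected_balance
    (heq : hcvEquil (dT * Tmax) rT rI dT dI Tmax β p q c η ε Ts Is Vs) (hδ : dI + q = dT) :
    (1 - η) * β * Vs * Ts = (dT + rI * ((Ts + Is) / Tmax - 1)) * Is := by
  linear_combination heq.2.1 + Is * hδ

theorem hcvEquil.coupling_eq
    (heq : hcvEquil (dT * Tmax) rT rI dT dI Tmax β p q c η ε Ts Is Vs) (hδ : dI + q = dT)
    (hIs : Is ≠ 0) :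
    (1 - ε) * p * ((1 - η) * β * Ts) = c * (dT + rI * ((Ts + Is) / Tmax - 1)) := by
  refine mul_right_cancel₀ hIs ?_
  linear_combination (1 - η) * β * Ts * heq.2.2 + c * heq.infected_balance hδ

theorem hcvEquil.jacobian_eq_reduced
    (heq : hcvEquil (dT * Tmax) rT rI dT dI Tmax β p q c η ε Ts Is Vs) (hδ : dI + q = dT)
    (hTs : Ts ≠ 0) (hTmax : Tmax ≠ 0) :
    !![rT * (1 - (2 * Ts + Is) / Tmax) - dT - (1 - η) * β * Vs,
        -(rT * Ts / Tmax) + q,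
        -((1 - η) * β * Ts);
        -(rI * Is / Tmax) + (1 - η) * β * Vs,
        rI * (1 - (Ts + 2 * Is) / Tmax) - dI - q,
        (1 - η) * β * Ts;
        0, (1 - ε) * p, -c]
      = !![-((dT * Tmax + q * Is) / Ts + rT * Ts / Tmax),
          q - rT * Ts / Tmax,
          -((1 - η) * β * Ts);
          (1 - η) * β * Vs - rI * Is / Tmax,
          -(dT + rI * ((Ts + Is) / Tmax - 1) + rI * Is / Tmax),
          (1 - η) * β * Ts;
          0, (1 - ε) * p, -c] := by
  have h00 : rT * (1 - (2 * Ts + Is) / Tmax) - dT - (1 - η) * β * Vs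
      = -((dT * Tmax + q * Is) / Ts + rT * Ts / Tmax) := by
    have e1 := heq.1
    field_simp at e1 ⊢
    linear_combination e1
  have h11 : rI * (1 - (Ts + 2 * Is) / Tmax) - dI - q
      = -(dT + rI * ((Ts + Is) / Tmax - 1) + rI * Is / Tmax) := by
    field_simp
    linear_combination -Tmax * hδ
  rw [h00, h11, neg_add_eq_sub, neg_add_eq_sub]

end Equilibrium

section ReducedJacobian

variable {rT rI dT dI q Tmax Ts Is u v : ℝ}

theorem hcv_lt_target_loss_mul (hrT : 0 < rT) (hTmax : 0 < Tmax) (hTs : 0 < Ts) :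
    dT * Tmax + q * Is < ((dT * Tmax + q * Is) / Ts + rT * Ts / Tmax) * Ts := by
  have hA : ((dT * Tmax + q * Is) / Ts + rT * Ts / Tmax) * Ts
      = dT * Tmax + q * Is + rT * Ts ^ 2 / Tmax := by
    field_simp
  have : 0 < rT * Ts ^ 2 / Tmax := by positivity
  linarith

theorem hcv_infection_lt_target_loss (hrT : 0 < rT) (hdT : 0 < dT) (hTmax : 0 < Tmax)
    (hTs : 0 < Ts) (hu0 : 0 < u) (hD : (dT * Tmax + rT * Ts + rI * Is) * u = q * Is)
    (hu : u * Tmax = Ts + Is - Tmax) (hvw : v * Ts = (dT + rI * u) * Is) :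
    v < (dT * Tmax + q * Is) / Ts + rT * Ts / Tmax := by
  have hw : (dT + rI * u) * Is + (dT + rT * u) * Ts = dT * Tmax + q * Is := by
    linear_combination hD - dT * hu
  have : 0 < (dT + rT * u) * Ts := by positivity
  refine lt_of_mul_lt_mul_right ?_ hTs.le
  linarith [hcv_lt_target_loss_mul (dT := dT) (q := q) (Is := Is) hrT hTmax hTs]

theorem hcv_cure_lt_infected_loss (hrI : 0 < rI) (hdI : 0 < dI) (hrT : 0 < rT)
    (hTmax : 0 < Tmax) (hTs : 0 < Ts) (hu0 : 0 < u) (hδ : dI + q = dT) :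
    q - rT * Ts / Tmax < dT + rI * u := by
  have : 0 < rT * Ts / Tmax := by positivity
  have : 0 < rI * u := by positivity
  linarith

theorem hcv_infected_loss_lt (hrT : 0 < rT) (hrI : 0 < rI) (hdT : 0 < dT) (hq : 0 < q)
    (hTmax : 0 < Tmax) (hTs : 0 < Ts) (hIs : 0 < Is)
    (hD : (dT * Tmax + rT * Ts + rI * Is) * u = q * Is) (hu : u * Tmax = Ts + Is - Tmax) :
    dT + rI * u < (dT * Tmax + q * Is) / Ts + rT * Ts / Tmax + (q - rT * Ts / Tmax) := by
  set D := dT * Tmax + rT * Ts + rI * Is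
  have hD0 : 0 < D := by positivity
  have key : ((dT * Tmax + q * Is) / Ts + q - (dT + rI * u)) * (Ts * D)
      = dT * Is * D + q * Is * (rT * Ts + rI * Is) + q * Ts * (dT * Tmax + rT * Ts) := by
    field_simp
    linear_combination (-(dT * Tmax) - rI * Ts) * hD + dT * D * hu
  have : 0 < ((dT * Tmax + q * Is) / Ts + q - (dT + rI * u)) * (Ts * D) := by
    rw [key]; positivity
  have := pos_of_mul_pos_left this (by positivity)
  linarith

theorem hcv_cure_mul_infection_lt (hrT : 0 < rT) (hdT : 0 < dT) (hTmax : 0 < Tmax)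
    (hTs : 0 < Ts) (hv : 0 < v) (hw : 0 < dT + rI * u) (hvw : v * Ts = (dT + rI * u) * Is) :
    (q - rT * Ts / Tmax) * v < ((dT * Tmax + q * Is) / Ts + rT * Ts / Tmax) * (dT + rI * u) := by
  have hcure : (q - rT * Ts / Tmax) * v < q * v := by
    have : 0 < rT * Ts / Tmax := by positivity
    nlinarith
  have hA : q * Is < ((dT * Tmax + q * Is) / Ts + rT * Ts / Tmax) * Ts := by
    linarith [hcv_lt_target_loss_mul (dT := dT) (q := q) (Is := Is) hrT hTmax hTs,
      mul_pos hdT hTmax]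
  have : q * v * Ts < ((dT * Tmax + q * Is) / Ts + rT * Ts / Tmax) * (dT + rI * u) * Ts := by
    calc q * v * Ts = q * Is * (dT + rI * u) := by rw [mul_assoc, hvw]; ring
      _ < _ := by nlinarith
  have := lt_of_mul_lt_mul_right this hTs.le
  linarith

end ReducedJacobian

theorem hcv_infected_local_stability_general
    (s rT rI dT dI Tmax β p q c η ε : ℝ)
    (hrT : 0 < rT) (hrI : 0 < rI) (hdT : 0 < dT) (hdI : 0 < dI)
    (hTmax : 0 < Tmax) (hq : 0 < q) (hc : 0 < c)
    (hsdT : s = dT * Tmax) (hδ : dI + q = dT)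
    (Ts Is Vs : ℝ) (hTs : 0 < Ts) (hIs : 0 < Is)
    (heq : hcvEquil s rT rI dT dI Tmax β p q c η ε Ts Is Vs)
    (J : Matrix (Fin 3) (Fin 3) ℝ)
    (hJ : J = !![rT * (1 - (2 * Ts + Is) / Tmax) - dT - (1 - η) * β * Vs,
                 -(rT * Ts / Tmax) + q,
                 -((1 - η) * β * Ts);
                 -(rI * Is / Tmax) + (1 - η) * β * Vs,
                 rI * (1 - (Ts + 2 * Is) / Tmax) - dI - q,
                 (1 - η) * β * Ts;
                 0, (1 - ε) * p, -c]) :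
    ∀ z ∈ spectrum ℂ (J.map (Complex.ofReal)), z.re < 0 := by
  subst hsdT hJ
  have hD := heq.excess_eq hδ hTmax.ne'
  have hu0 : 0 < (Ts + Is) / Tmax - 1 :=
    pos_of_mul_pos_right (hD ▸ mul_pos hq hIs) (by positivity)
  have hu : ((Ts + Is) / Tmax - 1) * Tmax = Ts + Is - Tmax := by field_simp
  have hw : 0 < dT + rI * ((Ts + Is) / Tmax - 1) := by positivity
  have hvw := heq.infected_balance hδ
  have hv : 0 < (1 - η) * β * Vs := pos_of_mul_pos_left (hvw ▸ by positivity) hTs.le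
  rw [heq.jacobian_eq_reduced hδ hTs.ne' hTmax.ne']
  exact re_neg_of_mem_spectrum_reduced_jacobian (by positivity) (by positivity) hw hv hc
    (heq.coupling_eq hδ hIs.ne')
    (hcv_cure_lt_infected_loss hrI hdI hrT hTmax hTs hu0 hδ)
    (hcv_infected_loss_lt hrT hrI hdT hq hTmax hTs hIs hD hu)
    (hcv_cure_mul_infection_lt hrT hdT hTmax hTs hv hw hvw)
    (hcv_infection_lt_target_loss hrT hdT hTmax hTs hu0 hD hu hvw)

/-- Local asymptotic stability of the infected equilibrium: when
`s = d_T T_max`, `δ = d_T` and `R₀ > 1`, all eigenvalues of the Jacobian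
at the positive equilibrium have negative real part. -/
theorem hcv_infected_local_stability
    (s rT rI dT dI Tmax β p q c η ε : ℝ)
    (hs : 0 < s) (hrT : 0 < rT) (hrI : 0 < rI) (hdT : 0 < dT) (hdI : 0 < dI)
    (hTmax : 0 < Tmax) (hβ : 0 < β) (hp : 0 < p) (hq : 0 < q) (hc : 0 < c)
    (hη : η ∈ Set.Ico (0 : ℝ) 1) (hε : ε ∈ Set.Ico (0 : ℝ) 1)
    (hrIT : rI ≤ rT)
    (hsdT : s = dT * Tmax) (hδ : dI + q = dT)
    (hR0 : 1 < hcvR0 s rT rI dT dI Tmax β p q c η ε)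
    (Ts Is Vs : ℝ) (hTs : 0 < Ts) (hIs : 0 < Is) (hVs : 0 < Vs)
    (heq : hcvEquil s rT rI dT dI Tmax β p q c η ε Ts Is Vs)
    (J : Matrix (Fin 3) (Fin 3) ℝ)
    (hJ : J = !![rT * (1 - (2 * Ts + Is) / Tmax) - dT - (1 - η) * β * Vs,
                 -(rT * Ts / Tmax) + q,
                 -((1 - η) * β * Ts);
                 -(rI * Is / Tmax) + (1 - η) * β * Vs,
                 rI * (1 - (Ts + 2 * Is) / Tmax) - dI - q,
                 (1 - η) * β * Ts;
                 0, (1 - ε) * p, -c]) :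
    ∀ z ∈ spectrum ℂ (J.map (Complex.ofReal)), z.re < 0 :=
  hcv_infected_local_stability_general s rT rI dT dI Tmax β p q c η ε hrT hrI hdT hdI hTmax hq hc
    hsdT hδ Ts Is Vs hTs hIs heq J hJ
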